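/- Let a, b, c be real numbers with a >= b > 0 and 0 < c < b/2, let 0 <= h < c, and define F : R^2 -> R by F(x1, x2) = min{a/2 - |x1|, b/2 - |x2|, x2 - x1 + (a+b)/2 - c}. Then the superlevel set {x in R^2 : F(x) >= h} equals the convex hull of the five points P1 = (-(a/2 - h), -(b/2 - h)), P2 = (a/2 - c, -(b/2 - h)), P3 = (a/2 - h, -(b/2 - c)), P4 = (a/2 - h, b/2 - h), P5 = (-(a/2 - h), b/2 - h). -/

import Mathlib

/-!
With `A = a/2 - h`, `B = b/2 - h`, the superlevel set is the rectangle `[-A, A] × [-B, B]`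
cut by the half-plane `x₁ - x₂ ≤ (a/2 - c) + B`. Being an intersection of half-planes it is
convex, and it contains the five vertices. Conversely, a point of it lies on a vertical segment
joining a point of the top edge `P₅P₄` to a point of the lower boundary `P₁P₂ ∪ P₂P₃`.
-/

open Set
open scoped Convex

section SegmentsInPlane

variable {𝕜 : Type*} [Field 𝕜] [LinearOrder 𝕜] [IsStrictOrderedRing 𝕜] {s t u : 𝕜}

lemma mk_mem_segment_mk_left {F : Type*} [AddCommGroup F] [Module 𝕜 F] (y : F)
    (hst : s ≤ t) (htu : t ≤ u) : (t, y) ∈ [(s, y) -[𝕜] (u, y)] := by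
  rw [← Prod.image_mk_segment_left, segment_eq_Icc (hst.trans htu)]
  exact mem_image_of_mem _ ⟨hst, htu⟩

lemma mk_mem_segment_mk_right {E : Type*} [AddCommGroup E] [Module 𝕜 E] (x : E)
    (hst : s ≤ t) (htu : t ≤ u) : (x, t) ∈ [(x, s) -[𝕜] (x, u)] := by
  rw [← Prod.image_mk_segment_right, segment_eq_Icc (hst.trans htu)]
  exact mem_image_of_mem _ ⟨hst, htu⟩

lemma mk_sub_mem_segment (k : 𝕜) (hst : s ≤ t) (htu : t ≤ u) :
    (t, t - k) ∈ [(s, s - k) -[𝕜] (u, u - k)] := by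
  have hline : ∀ r : 𝕜, AffineMap.lineMap ((0 : 𝕜), -k) (1, 1 - k) r = (r, r - k) := by
    intro r
    ext
    · simp [AffineMap.lineMap_apply_module]
    · simp [AffineMap.lineMap_apply_module]; ring
  rw [← hline s, ← hline t, ← hline u, ← image_segment, segment_eq_Icc (hst.trans htu)]
  exact mem_image_of_mem _ ⟨hst, htu⟩

end SegmentsInPlane

theorem Icc_prod_Icc_inter_sub_le_eq_convexHull {𝕜 : Type*} [Field 𝕜] [LinearOrder 𝕜]
    [IsStrictOrderedRing 𝕜] {A B p q : 𝕜} (hAp : -A ≤ p) (hpA : p ≤ A) (hqB : q ≤ B)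
    (hslope : A - p = q + B) :
    (Icc (-A) A ×ˢ Icc (-B) B) ∩ {x : 𝕜 × 𝕜 | x.1 - x.2 ≤ p + B} =
      convexHull 𝕜 {(-A, -B), (p, -B), (A, q), (A, B), (-A, B)} := by
  set V : Set (𝕜 × 𝕜) := {(-A, -B), (p, -B), (A, q), (A, B), (-A, B)}
  apply Subset.antisymm
  · have hK : Convex 𝕜 (convexHull 𝕜 V) := convex_convexHull 𝕜 V
    have hV : ∀ v ∈ V, v ∈ convexHull 𝕜 V := subset_convexHull 𝕜 V
    rintro ⟨x, y⟩ ⟨⟨⟨hxl, hxr⟩, ⟨hyl, hyr⟩⟩, hcut : x - y ≤ p + B⟩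
    have top : (x, B) ∈ convexHull 𝕜 V :=
      hK.segment_subset (hV _ (by simp [V])) (hV _ (by simp [V]))
        (mk_mem_segment_mk_left B hxl hxr)
    obtain ⟨y₀, hy₀, bottom⟩ : ∃ y₀ ≤ y, (x, y₀) ∈ convexHull 𝕜 V := by
      rcases le_total x p with hxp | hpx
      · exact ⟨-B, hyl, hK.segment_subset (hV _ (by simp [V])) (hV _ (by simp [V]))
          (mk_mem_segment_mk_left (-B) hxl hxp)⟩
      · have hP₂ : (p, p - (p + B)) ∈ V := by simp [V]
        have hP₃ : (A, A - (p + B)) ∈ V := by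
          rw [show A - (p + B) = q by linarith]
          simp [V]
        exact ⟨x - (p + B), by linarith,
          hK.segment_subset (hV _ hP₂) (hV _ hP₃) (mk_sub_mem_segment _ hpx hxr)⟩
    exact hK.segment_subset bottom top (mk_mem_segment_mk_right x hy₀ hyr)
  · refine convexHull_min ?_ (((convex_Icc _ _).prod (convex_Icc _ _)).inter
      (convex_halfSpace_le (LinearMap.fst 𝕜 𝕜 𝕜 - LinearMap.snd 𝕜 𝕜 𝕜).isLinear _))
    simp only [V, insert_subset_iff, singleton_subset_iff, mem_inter_iff, mem_prod, mem_Icc,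
      mem_ofPred_eq]
    refine ⟨⟨⟨⟨?_, ?_⟩, ?_, ?_⟩, ?_⟩, ⟨⟨⟨?_, ?_⟩, ?_, ?_⟩, ?_⟩, ⟨⟨⟨?_, ?_⟩, ?_, ?_⟩, ?_⟩,
      ⟨⟨⟨?_, ?_⟩, ?_, ?_⟩, ?_⟩, ⟨⟨⟨?_, ?_⟩, ?_, ?_⟩, ?_⟩⟩ <;> linarith

theorem stmt_6_general (a b c h : ℝ) (hab : b ≤ a) (hc : c < b / 2)
    (hhc : h < c)
    (F : ℝ × ℝ → ℝ)
    (hF : ∀ x : ℝ × ℝ,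
      F x = min (min (a / 2 - |x.1|) (b / 2 - |x.2|)) (x.2 - x.1 + (a + b) / 2 - c)) :
    {x : ℝ × ℝ | h ≤ F x} =
      convexHull ℝ
        {(-(a / 2 - h), -(b / 2 - h)), (a / 2 - c, -(b / 2 - h)),
         (a / 2 - h, -(b / 2 - c)), (a / 2 - h, b / 2 - h),
         (-(a / 2 - h), b / 2 - h)} := by
  have hsuperlevel : {x : ℝ × ℝ | h ≤ F x} =
      (Icc (-(a / 2 - h)) (a / 2 - h) ×ˢ Icc (-(b / 2 - h)) (b / 2 - h)) ∩
        {x | x.1 - x.2 ≤ a / 2 - c + (b / 2 - h)} := by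
    have hband : ∀ r t : ℝ, h ≤ r - |t| ↔ t ∈ Icc (-(r - h)) (r - h) := fun r t => by
      rw [mem_Icc, ← abs_le]
      constructor <;> intro <;> linarith
    ext x
    simp only [mem_ofPred_eq, hF, le_min_iff, hband, mem_inter_iff, mem_prod]
    exact and_congr_right fun _ => by constructor <;> intro <;> linarith
  rw [hsuperlevel]
  exact Icc_prod_Icc_inter_sub_le_eq_convexHull (by linarith) (by linarith) (by linarith)
    (by ring)

/-- For `0 ≤ h < c`, the superlevel set `{F ≥ h}` of the integral affine distance to the
boundary of the Delzant polygon is the pentagon with the five indicated vertices. -/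
theorem stmt_6 (a b c h : ℝ) (hab : b ≤ a) (hb : 0 < b) (hc0 : 0 < c) (hc : c < b / 2)
    (hh0 : 0 ≤ h) (hhc : h < c)
    (F : ℝ × ℝ → ℝ)
    (hF : ∀ x : ℝ × ℝ,
      F x = min (min (a / 2 - |x.1|) (b / 2 - |x.2|)) (x.2 - x.1 + (a + b) / 2 - c)) :
    {x : ℝ × ℝ | h ≤ F x} =
      convexHull ℝ
        {(-(a / 2 - h), -(b / 2 - h)), (a / 2 - c, -(b / 2 - h)),
         (a / 2 - h, -(b / 2 - c)), (a / 2 - h, b / 2 - h),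
         (-(a / 2 - h), b / 2 - h)} :=
  stmt_6_general a b c h hab hc hhc F hF
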